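/- Let β > 0 and t > 0. For every bounded Borel measurable function f : [0,∞) → ℝ, the function x ↦ p_t^β f(x) := ∫_0^∞ f(y) [ p^D(t,x,y/√2)/√2 + 2 g_{0,√2β}(t, x + y/√2) ] dy + √2 β g_{0,√2β}(t,x) f(0) is bounded and continuous on [0,∞). (Strong Feller property of the sticky Brownian transition semigroup.) -/

import Mathlib

open Real Set MeasureTheory Filter

/-- The complementary error function `erfc(u) = (2/√π) ∫_u^∞ e^{-z²} dz`. -/
noncomputable def erfc (u : ℝ) : ℝ :=
  (2 / Real.sqrt Real.pi) * ∫ z in Set.Ioi u, Real.exp (-z ^ 2)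

/-- `g_{0,γ}(t,x) = (1/γ) exp(2x/γ + 2t/γ²) erfc(x/√(2t) + √(2t)/γ)`. -/
noncomputable def g0 (γ t x : ℝ) : ℝ :=
  (1 / γ) * Real.exp (2 * x / γ + 2 * t / γ ^ 2) *
    erfc (x / Real.sqrt (2 * t) + Real.sqrt (2 * t) / γ)

/-- The Gaussian heat kernel `p(t,x,y) = (2πt)^{-1/2} e^{-(x-y)²/(2t)}`. -/
noncomputable def heatK (t x y : ℝ) : ℝ :=
  (Real.sqrt (2 * Real.pi * t))⁻¹ * Real.exp (-(x - y) ^ 2 / (2 * t))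

/-- The heat kernel with Dirichlet boundary condition at `0`:
`p^D(t,x,y) = p(t,x,y) − p(t,x,−y)`. -/
noncomputable def pD (t x y : ℝ) : ℝ :=
  heatK t x y - heatK t x (-y)

/-- The transition semigroup of sticky Brownian motion on `[0,∞)` with stickiness
parameter `β`, applied to a function `f`. -/
noncomputable def stickyP (β t : ℝ) (f : ℝ → ℝ) (x : ℝ) : ℝ :=
  (∫ y in Set.Ioi (0 : ℝ),
      f y * (pD t x (y / Real.sqrt 2) / Real.sqrt 2
        + 2 * g0 (Real.sqrt 2 * β) t (x + y / Real.sqrt 2)))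
    + Real.sqrt 2 * β * g0 (Real.sqrt 2 * β) t x * f 0

/-!
For `x, y ≥ 0` the absolutely continuous part of the kernel is nonnegative and, by
`erfc u ≤ 2 e^{-u²}` and completing the square in `g_{0,γ}`, at most a constant times the
Gaussian `exp (-(y - √2 x)² / (4t))`. A Gaussian of fixed width has the same integral wherever it
is centred, which bounds `p_t^β f` uniformly in `x`; for `x ∈ [0, R]` these Gaussians are all
dominated by a multiple of the one centred at `√2 R`, so dominated convergence gives continuity.
The atom term `√2 β g_{0,√2β}(t,x) f(0)` is continuous and bounded by `2 sup |f|`.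
-/

lemma integrable_exp_neg_mul_sq_sub {c : ℝ} (hc : 0 < c) (m : ℝ) :
    Integrable fun y : ℝ => exp (-c * (y - m) ^ 2) :=
  (integrable_exp_neg_mul_sq hc).comp_sub_right m

lemma integral_exp_neg_mul_sq_sub (c m : ℝ) :
    ∫ y : ℝ, exp (-c * (y - m) ^ 2) = √(π / c) :=
  (integral_sub_right_eq_self (fun y : ℝ => exp (-c * y ^ 2)) m).trans (integral_gaussian c)

lemma exp_neg_mul_sq_sub_le {c m R y : ℝ} (hc : 0 ≤ c) (hm : 0 ≤ m) (hmR : m ≤ R) (hy : 0 ≤ y) :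
    exp (-c * (y - m) ^ 2) ≤ exp (c * R ^ 2) * exp (-c * (y - R) ^ 2) := by
  rw [← exp_add, exp_le_exp]
  have : (y - R) ^ 2 - (y - m) ^ 2 ≤ R ^ 2 := by nlinarith [mul_nonneg hy (sub_nonneg.2 hmR)]
  nlinarith [mul_le_mul_of_nonneg_left this hc]

section GaussianBound

variable {B c : ℝ}

lemma abs_setIntegral_Ioi_le_of_gaussian_bound {F : ℝ → ℝ} {m : ℝ} (hc : 0 < c)
    (hF : ∀ y > 0, |F y| ≤ B * exp (-c * (y - m) ^ 2)) :
    |∫ y in Ioi 0, F y| ≤ B * √(π / c) := by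
  have hB : 0 ≤ B :=
    nonneg_of_mul_nonneg_left ((abs_nonneg _).trans (hF 1 one_pos)) (exp_pos _)
  have hG : Integrable fun y => B * exp (-c * (y - m) ^ 2) :=
    (integrable_exp_neg_mul_sq_sub hc m).const_mul B
  calc |∫ y in Ioi 0, F y| ≤ ∫ y in Ioi 0, B * exp (-c * (y - m) ^ 2) := by
        rw [← Real.norm_eq_abs]
        exact norm_integral_le_of_norm_le hG.integrableOn
          ((ae_restrict_iff' measurableSet_Ioi).2 (ae_of_all _ fun y hy => hF y hy))
    _ ≤ ∫ y, B * exp (-c * (y - m) ^ 2) :=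
        setIntegral_le_integral hG (ae_of_all _ fun y => by positivity)
    _ = B * √(π / c) := by rw [integral_const_mul, integral_exp_neg_mul_sq_sub]

lemma continuousOn_setIntegral_Ioi_of_gaussian_bound {F : ℝ → ℝ → ℝ} {a : ℝ} (hc : 0 < c)
    (ha : 0 ≤ a) (hF_meas : ∀ x, AEStronglyMeasurable (F x) (volume.restrict (Ioi 0)))
    (hF_cont : ∀ y, Continuous fun x => F x y)
    (hF : ∀ x ≥ 0, ∀ y > 0, |F x y| ≤ B * exp (-c * (y - a * x) ^ 2)) :
    ContinuousOn (fun x => ∫ y in Ioi 0, F x y) (Ici 0) := by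
  intro x₀ hx₀
  have hB : 0 ≤ B :=
    nonneg_of_mul_nonneg_left ((abs_nonneg _).trans (hF 0 le_rfl 1 one_pos)) (exp_pos _)
  set R := x₀ + 1
  -- near `x₀`, every Gaussian centred in `[0, a R]` is dominated by one centred at `a R`
  refine continuousWithinAt_of_dominated (Eventually.of_forall hF_meas) ?_
    ((integrable_exp_neg_mul_sq_sub hc (a * R)).const_mul
      (B * exp (c * (a * R) ^ 2))).integrableOn
    (ae_of_all _ fun y => (hF_cont y).continuousWithinAt)
  filter_upwards [self_mem_nhdsWithin,
    nhdsWithin_le_nhds (Iic_mem_nhds (show x₀ < R by linarith))] with x hx hxR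
  refine (ae_restrict_iff' measurableSet_Ioi).2 (ae_of_all _ fun y hy => ?_)
  rw [mul_assoc]
  exact (hF x hx y hy).trans (mul_le_mul_of_nonneg_left
    (exp_neg_mul_sq_sub_le hc.le (mul_nonneg ha hx) (by gcongr; exact hxR) hy.le) hB)

end GaussianBound

lemma erfc_nonneg (u : ℝ) : 0 ≤ erfc u :=
  mul_nonneg (by positivity) (setIntegral_nonneg measurableSet_Ioi fun _ _ => (exp_pos _).le)

lemma erfc_le_two_mul_exp {u : ℝ} (hu : 0 ≤ u) : erfc u ≤ 2 * exp (-u ^ 2) := by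
  have hG := (integrable_exp_neg_mul_sq_sub one_pos u).const_mul (exp (-u ^ 2))
  have hint : ∫ z in Ioi u, exp (-z ^ 2) ≤ exp (-u ^ 2) * √π := calc
    ∫ z in Ioi u, exp (-z ^ 2) ≤ ∫ z in Ioi u, exp (-u ^ 2) * exp (-1 * (z - u) ^ 2) :=
        setIntegral_mono_on (by simpa using (integrable_exp_neg_mul_sq one_pos).integrableOn)
          hG.integrableOn measurableSet_Ioi fun z hz => by
            rw [← exp_add, exp_le_exp]
            nlinarith [mem_Ioi.1 hz]
    _ ≤ ∫ z, exp (-u ^ 2) * exp (-1 * (z - u) ^ 2) :=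
        setIntegral_le_integral hG (ae_of_all _ fun _ => by positivity)
    _ = exp (-u ^ 2) * √π := by rw [integral_const_mul, integral_exp_neg_mul_sq_sub, div_one]
  calc erfc u ≤ 2 / √π * (exp (-u ^ 2) * √π) := mul_le_mul_of_nonneg_left hint (by positivity)
    _ = 2 * exp (-u ^ 2) := by field_simp

@[fun_prop]
lemma continuous_erfc : Continuous erfc := by
  have hint : Integrable fun z : ℝ => exp (-z ^ 2) := by
    simpa using integrable_exp_neg_mul_sq one_pos
  have hsplit (u : ℝ) : ∫ z in Ioi u, exp (-z ^ 2)
      = (∫ z in Ioi 0, exp (-z ^ 2)) - ∫ z in (0 : ℝ)..u, exp (-z ^ 2) := by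
    linarith [intervalIntegral.integral_Ioi_sub_Ioi' (a := 0) (b := u) hint.integrableOn
      hint.integrableOn]
  have hprim : Continuous fun u => ∫ z in (0 : ℝ)..u, exp (-z ^ 2) :=
    intervalIntegral.continuous_primitive (fun _ _ => hint.intervalIntegrable) 0
  have herfc : erfc = fun u =>
      2 / √π * ((∫ z in Ioi 0, exp (-z ^ 2)) - ∫ z in (0 : ℝ)..u, exp (-z ^ 2)) :=
    funext fun u => by rw [erfc, hsplit]
  rw [herfc]
  fun_prop

lemma g0_nonneg {γ : ℝ} (hγ : 0 < γ) (t x : ℝ) : 0 ≤ g0 γ t x :=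
  mul_nonneg (by positivity) (erfc_nonneg _)

@[fun_prop]
lemma continuous_g0 (γ t : ℝ) : Continuous (g0 γ t) := by
  unfold g0
  fun_prop

lemma g0_le {γ t x : ℝ} (hγ : 0 < γ) (ht : 0 < t) (hx : 0 ≤ x) :
    g0 γ t x ≤ 2 / γ * exp (-x ^ 2 / (2 * t)) := by
  set s := √(2 * t)
  have hs : 0 < s := sqrt_pos.2 (by positivity)
  have hs2 : s ^ 2 = 2 * t := sq_sqrt (by positivity)
  have hsquare : 2 * x / γ + 2 * t / γ ^ 2 - (x / s + s / γ) ^ 2 = -x ^ 2 / (2 * t) := by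
    rw [← hs2]
    field_simp
    ring
  calc g0 γ t x ≤ 1 / γ * exp (2 * x / γ + 2 * t / γ ^ 2) * (2 * exp (-(x / s + s / γ) ^ 2)) :=
        mul_le_mul_of_nonneg_left (erfc_le_two_mul_exp (by positivity)) (by positivity)
    _ = 2 / γ * exp (-x ^ 2 / (2 * t)) := by
        rw [← hsquare, sub_eq_add_neg, exp_add (2 * x / γ + 2 * t / γ ^ 2)]
        ring

lemma mul_g0_le_two {γ t x : ℝ} (hγ : 0 < γ) (ht : 0 < t) (hx : 0 ≤ x) : γ * g0 γ t x ≤ 2 := by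
  have hexp : exp (-x ^ 2 / (2 * t)) ≤ 1 :=
    exp_le_one_iff.2 (div_nonpos_of_nonpos_of_nonneg (neg_nonpos.2 (sq_nonneg x)) (by positivity))
  calc γ * g0 γ t x ≤ γ * (2 / γ * 1) := by gcongr; exact (g0_le hγ ht hx).trans (by gcongr)
    _ = 2 := by field_simp

lemma heatK_nonneg (t x y : ℝ) : 0 ≤ heatK t x y := by
  unfold heatK
  positivity

lemma heatK_neg_le {t x z : ℝ} (ht : 0 ≤ t) (hx : 0 ≤ x) (hz : 0 ≤ z) :
    heatK t x (-z) ≤ heatK t x z := by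
  unfold heatK
  gcongr _ * exp ?_
  exact div_le_div_of_nonneg_right (by nlinarith [mul_nonneg hx hz]) (by linarith)

lemma pD_nonneg {t x z : ℝ} (ht : 0 ≤ t) (hx : 0 ≤ x) (hz : 0 ≤ z) : 0 ≤ pD t x z :=
  sub_nonneg.2 (heatK_neg_le ht hx hz)

lemma pD_le_heatK (t x z : ℝ) : pD t x z ≤ heatK t x z :=
  sub_le_self _ (heatK_nonneg _ _ _)

/-- The density of the absolutely continuous part of `p_t^β(x, ·)`, with `γ = √2 β`. -/
noncomputable def stickyKernel (γ t x y : ℝ) : ℝ :=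
  pD t x (y / √2) / √2 + 2 * g0 γ t (x + y / √2)

lemma stickyP_eq (β t : ℝ) (f : ℝ → ℝ) : stickyP β t f = fun x =>
    (∫ y in Ioi 0, f y * stickyKernel (√2 * β) t x y) + √2 * β * g0 (√2 * β) t x * f 0 :=
  rfl

lemma continuous_stickyKernel_left (γ t y : ℝ) : Continuous fun x => stickyKernel γ t x y := by
  unfold stickyKernel pD heatK
  fun_prop

lemma continuous_stickyKernel_right (γ t x : ℝ) : Continuous (stickyKernel γ t x) := by
  unfold stickyKernel pD heatK
  fun_prop

lemma abs_stickyKernel_le {γ t x y : ℝ} (hγ : 0 < γ) (ht : 0 < t) (hx : 0 ≤ x) (hy : 0 ≤ y) :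
    |stickyKernel γ t x y|
      ≤ ((√(2 * π * t))⁻¹ + 4 / γ) * exp (-(1 / (4 * t)) * (y - √2 * x) ^ 2) := by
  rw [stickyKernel]
  set z := y / √2 with hz_def
  have hyz : y = √2 * z := by rw [hz_def]; field_simp
  have hz : 0 ≤ z := by positivity
  clear_value z
  have hgauss : -(x - z) ^ 2 / (2 * t) = -(1 / (4 * t)) * (y - √2 * x) ^ 2 := by
    rw [hyz, ← mul_sub, mul_pow, sq_sqrt zero_le_two]
    ring
  have hpD : pD t x z / √2 ≤ (√(2 * π * t))⁻¹ * exp (-(x - z) ^ 2 / (2 * t)) :=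
    (div_le_self (pD_nonneg ht.le hx hz) one_lt_sqrt_two.le).trans (pD_le_heatK t x z)
  have hg0 : g0 γ t (x + z) ≤ 2 / γ * exp (-(x - z) ^ 2 / (2 * t)) := by
    refine (g0_le hγ ht (by positivity)).trans ?_
    gcongr _ * exp ?_
    exact div_le_div_of_nonneg_right (by nlinarith [mul_nonneg hx hz]) (by linarith)
  rw [abs_of_nonneg (add_nonneg (div_nonneg (pD_nonneg ht.le hx hz) (sqrt_nonneg 2))
    (mul_nonneg zero_le_two (g0_nonneg hγ t (x + z)))), ← hgauss]
  linear_combination hpD + 2 * hg0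

/-- Strong Feller property of the sticky Brownian transition semigroup: for `β, t > 0` and
every bounded Borel measurable `f` on `[0,∞)`, the function `p_t^β f` is bounded and
continuous on `[0,∞)`. -/
theorem stickyP_strong_feller (β t : ℝ) (hβ : 0 < β) (ht : 0 < t)
    (f : ℝ → ℝ) (hf : Measurable f) (C : ℝ) (hfC : ∀ y ∈ Set.Ici (0 : ℝ), |f y| ≤ C) :
    (∃ M : ℝ, ∀ x ∈ Set.Ici (0 : ℝ), |stickyP β t f x| ≤ M) ∧
      ContinuousOn (stickyP β t f) (Set.Ici 0) := by
  rw [stickyP_eq]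
  set γ := √2 * β
  have hγ : 0 < γ := by positivity
  have hc : 0 < 1 / (4 * t) := by positivity
  set A := (√(2 * π * t))⁻¹ + 4 / γ
  have hF (x : ℝ) (hx : x ≥ 0) (y : ℝ) (hy : y > 0) :
      |f y * stickyKernel γ t x y| ≤ C * A * exp (-(1 / (4 * t)) * (y - √2 * x) ^ 2) := by
    rw [abs_mul, mul_assoc]
    exact mul_le_mul (hfC y hy.le) (abs_stickyKernel_le hγ ht hx hy.le) (abs_nonneg _)
      ((abs_nonneg _).trans (hfC y hy.le))
  have hatom (x : ℝ) (hx : 0 ≤ x) : |γ * g0 γ t x * f 0| ≤ 2 * C := by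
    rw [abs_mul, abs_of_nonneg (mul_nonneg hγ.le (g0_nonneg hγ t x))]
    exact mul_le_mul (mul_g0_le_two hγ ht hx) (hfC 0 self_mem_Ici) (abs_nonneg _) zero_le_two
  refine ⟨⟨C * A * √(π / (1 / (4 * t))) + 2 * C, fun x hx => (abs_add_le _ _).trans
    (add_le_add (abs_setIntegral_Ioi_le_of_gaussian_bound hc (hF x hx)) (hatom x hx))⟩, ?_⟩
  refine ContinuousOn.add ?_ (by fun_prop)
  exact continuousOn_setIntegral_Ioi_of_gaussian_bound hc (sqrt_nonneg 2)
    (fun x => (hf.mul (continuous_stickyKernel_right γ t x).measurable).aestronglyMeasurable)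
    (fun y => continuous_const.mul (continuous_stickyKernel_left γ t y)) hF
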